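/- Let G = (V, E) be a finite simple graph, β ≥ 5 a real, f(β) := 1 − 3/β, and K an integer. Let ℓ : V → ℤ satisfy ℓ(v) ≥ K for all v, let w : E → ℝ≥0 be edge weights with node weights W_v, let E^r := {(u,v) ∈ E : ℓ(u) = ℓ(v) = K}, and let w^r : E → ℝ≥0 be residual edge weights with w^r(e) = 0 for every e ∉ E^r, with residual node weights W^r_v. Assume: (i) W_v ≥ f(β) for every node v with ℓ(v) > K; (a) W_v + W^r_v ≤ 1 for every node v; and (b) every edge (u,v) ∈ E^r has an endpoint x ∈ {u,v} with W_x + W^r_x ≥ 1 − 1/β. Then for every vertex cover C of G, the set V* := {v ∈ V : W_v + W^r_v ≥ f(β)} satisfies |V*| ≤ (2/f(β)) · |C|; that is, V* is a (2/f(β))-approximate minimum vertex cover of G. -/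

import Mathlib

open Finset

variable {V : Type*}

/-- The weight of a node `v`: the sum of the weights of the edges incident on `v`. -/
noncomputable def nodeWeight [Fintype V] [DecidableEq V] (G : SimpleGraph V)
    [DecidableRel G.Adj] (w : Sym2 V → ℝ) (v : V) : ℝ :=
  ∑ e ∈ G.edgeFinset, if v ∈ e then w e else 0

/-- A fractional matching: nonnegative edge weights with all node weights at most 1. -/
def IsFractionalMatching [Fintype V] [DecidableEq V] (G : SimpleGraph V)
    [DecidableRel G.Adj] (w : Sym2 V → ℝ) : Prop :=
  (∀ e ∈ G.edgeFinset, 0 ≤ w e) ∧ ∀ v, nodeWeight G w v ≤ 1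

/-- A vertex cover: every edge has at least one endpoint in the set. -/
def IsVertexCover (G : SimpleGraph V) (C : Set V) : Prop :=
  ∀ ⦃u v : V⦄, G.Adj u v → u ∈ C ∨ v ∈ C

/-!
`w + w^r` is a fractional matching by (a). Each vertex of `V*` carries node weight at least
`f(β)`, and the node weights of all vertices add up to twice the size of the matching, so
`f(β) |V*| ≤ 2 Σ_e (w + w^r)(e)`. Since every edge has an endpoint in the cover `C` and every
node weight is at most `1`, the size of any fractional matching is at most `|C|`.
-/

section

variable [Fintype V] [DecidableEq V] {G : SimpleGraph V} [DecidableRel G.Adj]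
  {w : Sym2 V → ℝ}

lemma nodeWeight_add (w₁ w₂ : Sym2 V → ℝ) (v : V) :
    nodeWeight G (w₁ + w₂) v = nodeWeight G w₁ v + nodeWeight G w₂ v := by
  simp only [nodeWeight, ← sum_add_distrib, Pi.add_apply]
  exact sum_congr rfl fun e _ => by split_ifs <;> simp

lemma nodeWeight_nonneg (hw : ∀ e ∈ G.edgeFinset, 0 ≤ w e) (v : V) :
    0 ≤ nodeWeight G w v :=
  sum_nonneg fun e he => by split_ifs <;> simp [hw e he]

lemma sum_nodeWeight (S : Finset V) :
    ∑ v ∈ S, nodeWeight G w v = ∑ e ∈ G.edgeFinset, (#{v ∈ S | v ∈ e} : ℝ) * w e := by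
  simp only [nodeWeight]
  rw [sum_comm]
  exact sum_congr rfl fun e _ => by rw [← sum_filter, sum_const, nsmul_eq_mul]

lemma sum_nodeWeight_univ :
    ∑ v, nodeWeight G w v = 2 * ∑ e ∈ G.edgeFinset, w e := by
  rw [sum_nodeWeight, mul_sum]
  refine sum_congr rfl fun e he => ?_
  have hcard : #{v | v ∈ e} = 2 := by
    rw [← G.card_toFinset_mem_edgeFinset ⟨e, he⟩]
    congr 1
    ext v
    simp [Sym2.mem_toFinset]
  rw [hcard, Nat.cast_ofNat]

namespace IsFractionalMatching

lemma sum_le_ncard (hw : IsFractionalMatching G w) {C : Set V} (hC : IsVertexCover G C) :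
    ∑ e ∈ G.edgeFinset, w e ≤ C.ncard := by
  set S := C.toFinite.toFinset
  have hcovered : ∀ e ∈ G.edgeFinset, (1 : ℝ) ≤ #{v ∈ S | v ∈ e} := by
    intro e he
    induction e using Sym2.ind with
    | _ a b =>
      rw [SimpleGraph.mem_edgeFinset, SimpleGraph.mem_edgeSet] at he
      have hne : ({v ∈ S | v ∈ s(a, b)} : Finset V).Nonempty := by
        rcases hC he with h | h
        · exact ⟨a, by simpa [S] using h⟩
        · exact ⟨b, by simpa [S] using h⟩
      exact_mod_cast hne.card_pos
  calc ∑ e ∈ G.edgeFinset, w e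
      ≤ ∑ e ∈ G.edgeFinset, (#{v ∈ S | v ∈ e} : ℝ) * w e :=
        sum_le_sum fun e he => le_mul_of_one_le_left (hw.1 e he) (hcovered e he)
    _ = ∑ v ∈ S, nodeWeight G w v := (sum_nodeWeight S).symm
    _ ≤ ∑ _v ∈ S, (1 : ℝ) := sum_le_sum fun v _ => hw.2 v
    _ = C.ncard := by rw [sum_const, nsmul_one, Set.ncard_eq_toFinset_card C]

lemma mul_ncard_setOf_le (hw : IsFractionalMatching G w) {C : Set V} (hC : IsVertexCover G C)
    (t : ℝ) : t * {v | t ≤ nodeWeight G w v}.ncard ≤ 2 * C.ncard := by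
  calc t * {v | t ≤ nodeWeight G w v}.ncard
      = ∑ _v ∈ {v | t ≤ nodeWeight G w v}, t := by
        rw [Set.ncard_eq_toFinset_card', Set.toFinset_ofPred, sum_const, nsmul_eq_mul, mul_comm]
    _ ≤ ∑ v ∈ {v | t ≤ nodeWeight G w v}, nodeWeight G w v :=
        sum_le_sum fun v hv => (mem_filter.mp hv).2
    _ ≤ ∑ v, nodeWeight G w v :=
        sum_le_sum_of_subset_of_nonneg (subset_univ _) fun v _ _ => nodeWeight_nonneg hw.1 v
    _ = 2 * ∑ e ∈ G.edgeFinset, w e := sum_nodeWeight_univ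
    _ ≤ 2 * C.ncard := by linarith [hw.sum_le_ncard hC]

end IsFractionalMatching

end

theorem stmt7_general [Fintype V] [DecidableEq V] (G : SimpleGraph V) [DecidableRel G.Adj]
    (β : ℝ) (hβ : 5 ≤ β)
    (w wr : Sym2 V → ℝ)
    (hw : ∀ e ∈ G.edgeFinset, 0 ≤ w e) (hwr : ∀ e ∈ G.edgeFinset, 0 ≤ wr e)
    -- (a) W_v + W^r_v ≤ 1 for every node v
    (ha : ∀ v : V, nodeWeight G w v + nodeWeight G wr v ≤ 1) :
    ∀ C : Set V, IsVertexCover G C →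
      (({v : V | 1 - 3 / β ≤ nodeWeight G w v + nodeWeight G wr v} : Set V).ncard : ℝ) ≤
        (2 / (1 - 3 / β)) * (C.ncard : ℝ) := by
  intro C hC
  have hf : 0 < 1 - 3 / β := by
    rw [sub_pos, div_lt_one (by linarith)]
    linarith
  have hmatching : IsFractionalMatching G (w + wr) :=
    ⟨fun e he => add_nonneg (hw e he) (hwr e he), fun v => nodeWeight_add (G := G) w wr v ▸ ha v⟩
  have key := hmatching.mul_ncard_setOf_le hC (1 - 3 / β)
  simp only [nodeWeight_add] at key
  rw [div_mul_eq_mul_div, le_div_iff₀ hf]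
  linarith

theorem stmt7 [Fintype V] [DecidableEq V] (G : SimpleGraph V) [DecidableRel G.Adj]
    (β : ℝ) (hβ : 5 ≤ β) (K : ℤ) (ℓ : V → ℤ) (hK : ∀ v : V, K ≤ ℓ v)
    (w wr : Sym2 V → ℝ)
    (hw : ∀ e ∈ G.edgeFinset, 0 ≤ w e) (hwr : ∀ e ∈ G.edgeFinset, 0 ≤ wr e)
    -- the residual weights vanish outside E^r = {(u,v) ∈ E : ℓ u = K ∧ ℓ v = K}
    (hwr0 : ∀ u v : V, ¬ (G.Adj u v ∧ ℓ u = K ∧ ℓ v = K) → wr s(u, v) = 0)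
    -- (i) every node at level above K has weight at least f(β) = 1 - 3/β
    (hi : ∀ v : V, K < ℓ v → 1 - 3 / β ≤ nodeWeight G w v)
    -- (a) W_v + W^r_v ≤ 1 for every node v
    (ha : ∀ v : V, nodeWeight G w v + nodeWeight G wr v ≤ 1)
    -- (b) every edge of E^r has an endpoint x with W_x + W^r_x ≥ 1 - 1/β
    (hb : ∀ u v : V, G.Adj u v → ℓ u = K → ℓ v = K →
      1 - 1 / β ≤ nodeWeight G w u + nodeWeight G wr u ∨
      1 - 1 / β ≤ nodeWeight G w v + nodeWeight G wr v) :
    ∀ C : Set V, IsVertexCover G C →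
      (({v : V | 1 - 3 / β ≤ nodeWeight G w v + nodeWeight G wr v} : Set V).ncard : ℝ) ≤
        (2 / (1 - 3 / β)) * (C.ncard : ℝ) :=
  stmt7_general G β hβ w wr hw hwr ha
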